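/- arXiv:1211.0788 — 4 statements merged into one kernel-verified Lean document; each statement's English description precedes it below -/
import Mathlib

section
/- Let D be a prime congruent to 1 mod 4, let A, B be half-integers with A + B√D an algebraic integer of F = Q(√D), and suppose ~D = A² − B²D is a squarefree positive integer congruent to 1 mod 4. Let δ, n be integers with δ > 0, D − 4δ a square, n ≡ −c_K δ (mod 2D) where 2c_K ≡ 2A (mod D) and c_K is odd, and N := (δ²~D − n²)/(4D) a positive integer. Assume d_u(n) := δ(2n + 2δA)/D is a fundamental discriminant. Then gcd(δ, N) = 1. -/
/-! A common prime `p` of `δ` and `N` divides `n`, because `n² = δ²~D - 4DN`, and `p ≠ D`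
because `0 < 4δ ≤ D`; so `p²` divides `D d_u = δ(2n + δA2)`, hence `d_u`. An odd prime square
cannot divide a fundamental discriminant. For `p = 2` the argument has to go one step further:
`D = s² + 4δ` is then `≡ 1 mod 8`, which together with `~D ≡ 1 mod 4` forces `A2 ≡ 2 mod 4`
(`A` odd), and the definition of `N` gives `n/2 ≡ δ/2 mod 2`; these two congruences make
`16 ∣ d_u`, which no fundamental discriminant allows. -/

/-- `d` is a fundamental discriminant: the discriminant of a quadratic field. -/
def IsFundamentalDiscriminant (d : ℤ) : Prop :=
  (d % 4 = 1 ∧ Squarefree d) ∨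
    (∃ m : ℤ, d = 4 * m ∧ Squarefree m ∧ (m % 4 = 2 ∨ m % 4 = 3))

theorem Int.sq_emod_eight_eq_one_of_odd {x : ℤ} (hx : Odd x) : x ^ 2 % 8 = 1 := by
  obtain ⟨k, rfl⟩ := hx
  obtain ⟨j, hj⟩ := Int.even_mul_succ_self k
  have : (2 * k + 1) ^ 2 = 8 * j + 1 := by linear_combination 4 * hj
  omega

theorem Int.sq_emod_four_eq_zero_of_even {x : ℤ} (hx : Even x) : x ^ 2 % 4 = 0 := by
  obtain ⟨k, rfl⟩ := hx
  have : (k + k) ^ 2 = 4 * k ^ 2 := by ring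
  omega

theorem emod_four_eq_two_of_four_mul_eq_sq_sub {a b D t : ℤ} (hD : D % 8 = 1) (ht : t % 4 = 1)
    (h : 4 * t = a ^ 2 - b ^ 2 * D) : a % 4 = 2 := by
  have hmulD : ∀ y : ℤ, y * D % 8 = y % 8 := fun y => by simp [Int.mul_emod, hD]
  have hbD := hmulD (b ^ 2)
  rcases Int.even_or_odd a with ha | ha <;> rcases Int.even_or_odd b with hb' | hb'
  · obtain ⟨c, rfl⟩ := ha
    obtain ⟨e, rfl⟩ := hb'
    have hce : t = c ^ 2 - e ^ 2 * D := by linarith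
    rcases Int.even_or_odd c with hc | hc
    · have := Int.sq_emod_four_eq_zero_of_even hc
      have := hmulD (e ^ 2)
      rcases Int.even_or_odd e with he | he
      · have := Int.sq_emod_four_eq_zero_of_even he
        omega
      · have := Int.sq_emod_eight_eq_one_of_odd he
        omega
    · have := Int.odd_iff.mp hc
      omega
  · have := Int.sq_emod_four_eq_zero_of_even ha
    have := Int.sq_emod_eight_eq_one_of_odd hb'
    omega
  · have := Int.sq_emod_eight_eq_one_of_odd ha
    have := Int.sq_emod_four_eq_zero_of_even hb'
    omega
  · have := Int.sq_emod_eight_eq_one_of_odd ha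
    have := Int.sq_emod_eight_eq_one_of_odd hb'
    omega

theorem IsFundamentalDiscriminant.not_sixteen_dvd {d : ℤ} (hd : IsFundamentalDiscriminant d) :
    ¬ 16 ∣ d := by
  rcases hd with ⟨hd4, -⟩ | ⟨m, rfl, -, hm4⟩ <;> omega

theorem IsFundamentalDiscriminant.not_sq_dvd {d p : ℤ} (hd : IsFundamentalDiscriminant d)
    (hp : Prime p) (hp2 : ¬ p ∣ 2) : ¬ p ^ 2 ∣ d := by
  intro hpd
  rw [sq] at hpd
  rcases hd with ⟨-, hsf⟩ | ⟨m, rfl, hsf, -⟩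
  · exact hp.not_isUnit (hsf p hpd)
  · have hcop : IsCoprime (p * p) 4 := by
      simpa [← sq] using ((hp.coprime_iff_not_dvd.mpr hp2).pow (m := 2) (n := 2))
    exact hp.not_isUnit (hsf p (hcop.dvd_of_dvd_mul_left hpd))

theorem sixteen_dvd_of_two_dvd {D Dt A2 B2 δ s n N du : ℤ} (hD4 : D % 4 = 1) (hDt4 : Dt % 4 = 1)
    (hDt : 4 * Dt = A2 ^ 2 - B2 ^ 2 * D) (hs : D - 4 * δ = s ^ 2)
    (hN : 4 * D * N = δ ^ 2 * Dt - n ^ 2) (hdu : D * du = δ * (2 * n + δ * A2))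
    (hδ : 2 ∣ δ) (hn : 2 ∣ n) (hN2 : 2 ∣ N) : 16 ∣ du := by
  obtain ⟨d, rfl⟩ := hδ
  obtain ⟨m, rfl⟩ := hn
  obtain ⟨N', rfl⟩ := hN2
  have hD8 : D % 8 = 1 := by
    rcases Int.even_or_odd s with hs' | hs'
    · have := Int.sq_emod_four_eq_zero_of_even hs'
      omega
    · have := Int.sq_emod_eight_eq_one_of_odd hs'
      omega
  obtain ⟨a, rfl⟩ : ∃ a, A2 = 4 * a + 2 :=
    ⟨A2 / 4, by have := emod_four_eq_two_of_four_mul_eq_sq_sub hD8 hDt4 hDt; omega⟩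
  obtain ⟨g, hg⟩ : Even (m + d) := by
    obtain ⟨u, rfl⟩ : ∃ u, Dt = 2 * u - 1 := ⟨(Dt + 1) / 2, by omega⟩
    have hsum : m ^ 2 + d ^ 2 = 2 * (d ^ 2 * u - D * N') := by linarith
    have : Even (m ^ 2 + d ^ 2) := ⟨d ^ 2 * u - D * N', by rw [hsum]; ring⟩
    simpa [Int.even_add, Int.even_pow] using this
  have h16 : 16 ∣ D * du := ⟨d * g + a * d ^ 2, by rw [hdu]; linear_combination 8 * d * hg⟩
  have hcop : IsCoprime (16 : ℤ) D := by
    have h2D : IsCoprime (2 : ℤ) D := Int.prime_two.coprime_iff_not_dvd.mpr (by omega)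
    simpa using h2D.pow_left (m := 4)
  exact hcop.dvd_of_dvd_mul_left h16

theorem stmt_7_general (D : ℤ) (hD : Prime D) (hD4 : D % 4 = 1)
    (A2 B2 : ℤ)
    (Dt : ℤ) (hDt : 4 * Dt = A2 ^ 2 - B2 ^ 2 * D)
    (hDt4 : Dt % 4 = 1)
    (δ : ℤ) (hδ : 0 < δ) (s : ℤ) (hs : D - 4 * δ = s ^ 2)
    (n : ℤ)
    (N : ℤ) (hN : 4 * D * N = δ ^ 2 * Dt - n ^ 2)
    (du : ℤ) (hdu : D * du = δ * (2 * n + δ * A2))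
    (hfund : IsFundamentalDiscriminant du) :
    Int.gcd δ N = 1 := by
  refine Int.isCoprime_iff_gcd_eq_one.mp <|
    isCoprime_of_prime_dvd (fun h => hδ.ne' h.1) fun p hp hpδ hpN => ?_
  have hpn : p ∣ n := by
    have hn2 : n ^ 2 = δ * (δ * Dt) - 4 * D * N := by linear_combination hN
    exact hp.dvd_of_dvd_pow (n := 2) (hn2 ▸ dvd_sub (hpδ.mul_right _) (hpN.mul_left _))
  by_cases hp2 : p ∣ 2
  · have h2p := (hp.associated_of_dvd Int.prime_two hp2).symm.dvd
    exact hfund.not_sixteen_dvd <| sixteen_dvd_of_two_dvd hD4 hDt4 hDt hs hN hdu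
      (h2p.trans hpδ) (h2p.trans hpn) (h2p.trans hpN)
  · have hpD : ¬ p ∣ D := fun hpD => by
      have hDδ : D ∣ δ := (hp.associated_of_dvd hD hpD).symm.dvd.trans hpδ
      nlinarith [Int.le_of_dvd hδ hDδ, sq_nonneg s]
    have hp2du : p ^ 2 ∣ D * du :=
      hdu ▸ sq p ▸ mul_dvd_mul hpδ (dvd_add (hpn.mul_left 2) (hpδ.mul_right A2))
    exact hfund.not_sq_dvd hp hp2
      ((hp.coprime_iff_not_dvd.mpr hpD).pow_left.dvd_of_dvd_mul_left hp2du)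

/-- Let `D` be a prime `≡ 1 mod 4`, `A = A2/2`, `B = B2/2` half-integers with
`A + B√D ∈ 𝓞 F` (i.e. `A2 ≡ B2 mod 2`), and `~D = A² - B²D` (i.e. `4 ~D = A2² - B2² D`)
squarefree, positive and `≡ 1 mod 4`.  Let `δ > 0` with `D - 4δ` a square, and `n` with
`n ≡ -c_K δ (mod 2D)`, where `c_K` is odd and `2 c_K ≡ 2A (mod D)`, and
`N = (δ² ~D - n²)/(4D)` a positive integer.  If `d_u(n) = δ(2n + 2δA)/D` is a fundamental
discriminant, then `gcd(δ, N) = 1`. -/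
theorem stmt_7 (D : ℤ) (hD : Prime D) (hD4 : D % 4 = 1)
    (A2 B2 : ℤ) (hhalf : A2 % 2 = B2 % 2)
    (Dt : ℤ) (hDt : 4 * Dt = A2 ^ 2 - B2 ^ 2 * D)
    (hDtsf : Squarefree Dt) (hDtpos : 0 < Dt) (hDt4 : Dt % 4 = 1)
    (cK : ℤ) (hcKodd : Odd cK) (hcKA : D ∣ 2 * cK - A2)
    (δ : ℤ) (hδ : 0 < δ) (s : ℤ) (hs : D - 4 * δ = s ^ 2)
    (n : ℤ) (hn : (2 * D) ∣ (n + cK * δ))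
    (N : ℤ) (hN : 4 * D * N = δ ^ 2 * Dt - n ^ 2) (hNpos : 0 < N)
    (du : ℤ) (hdu : D * du = δ * (2 * n + δ * A2))
    (hfund : IsFundamentalDiscriminant du) :
    Int.gcd δ N = 1 :=
  stmt_7_general D hD hD4 A2 B2 Dt hDt hDt4 δ hδ s hs n N hN du hdu hfund
end

section
/- Let D be a prime, ~D a squarefree positive integer, A, B half-integers with ~D = A² − B²D. Let δ > 0 be an integer with D − 4δ a square and p a prime not dividing δ. Set d_u(n) = δ(2n+2δA)/D and d_x(n) = A − B√(D−4δ) − (2n+2δA)/D, where n is an integer with 2D | (n + c_Kδ) and N = (δ²~D − n²)/(4D) a positive integer divisible by p. Then p cannot divide both d_u(n) and d_x(n). -/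
/-- With `D` prime, `~D = A² - B²D` squarefree positive (`A = A2/2`,
`B = B2/2` half-integers), `δ > 0` with `D - 4δ = s²`, and `p` a prime not dividing `δ`:
if `n` satisfies `2D ∣ (n + c_K δ)` and `p` divides `N = (δ² ~D - n²)/(4D) > 0`, then `p`
cannot divide both `d_u(n) = δ m` and `d_x(n) = e - m`, where `m = (2n + δ A2)/D` and
`e = (A2 - B2 s)/2`. -/
theorem stmt_8 (D : ℤ) (hD : Prime D)
    (A2 B2 : ℤ) (hhalf : A2 % 2 = B2 % 2)
    (Dt : ℤ) (hDt : 4 * Dt = A2 ^ 2 - B2 ^ 2 * D)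
    (hDtsf : Squarefree Dt) (hDtpos : 0 < Dt)
    (cK : ℤ) (hcKodd : Odd cK) (hcKA : D ∣ 2 * cK - A2)
    (δ : ℤ) (hδ : 0 < δ) (s : ℤ) (hs : D - 4 * δ = s ^ 2)
    (p : ℕ) (hp : p.Prime) (hpδ : ¬ (p : ℤ) ∣ δ)
    (n : ℤ) (hn : (2 * D) ∣ (n + cK * δ))
    (N : ℤ) (hN : 4 * D * N = δ ^ 2 * Dt - n ^ 2) (hNpos : 0 < N)
    (hpN : (p : ℤ) ∣ N)
    (m : ℤ) (hm : D * m = 2 * n + δ * A2)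
    (e : ℤ) (he : 2 * e = A2 - B2 * s) :
    ¬ ((p : ℤ) ∣ δ * m ∧ (p : ℤ) ∣ (e - m)) := by
  rintro ⟨h1, h2⟩
  have hpp : Prime (p : ℤ) := Nat.prime_iff_prime_int.mp hp
  -- key identity
  have key : 16 * N = 4 * δ * m * (e - m) - (s * m - δ * B2) ^ 2 := by
    have h : D * (16 * N) = D * (4 * δ * m * (e - m) - (s * m - δ * B2) ^ 2) := by
      linear_combination 4*hN + δ^2*hDt + (D*m - δ*A2 + 2*n)*hm - D*m^2*hs - 2*D*δ*m*he
    exact mul_left_cancel₀ hD.ne_zero h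
  have hpm : (p : ℤ) ∣ m := ((hpp.dvd_mul).mp h1).resolve_left hpδ
  -- D is odd (since D = s² + 4δ ≥ 4 and prime)
  have hD4 : 4 ≤ D := by nlinarith [sq_nonneg s]
  have hDodd : D % 2 = 1 := by
    rcases Int.emod_two_eq_zero_or_one D with h | h
    · exfalso
      obtain ⟨k, hk⟩ : (2 : ℤ) ∣ D := Int.dvd_of_emod_eq_zero h
      rcases hD.irreducible.isUnit_or_isUnit hk with hu | hu
      · exact (by decide : ¬ IsUnit (2 : ℤ)) hu
      · rcases Int.isUnit_iff.mp hu with rfl | rfl <;> omega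
    · exact h
  rcases hp.eq_two_or_odd' with rfl | hpodd
  · -- p = 2 : parity contradiction
    have hδodd : δ % 2 = 1 := by
      rcases Int.emod_two_eq_zero_or_one δ with h | h
      · exact absurd (by exact_mod_cast Int.dvd_of_emod_eq_zero h) hpδ
      · exact h
    have hsodd : s % 2 = 1 := by
      rcases Int.emod_two_eq_zero_or_one s with h | h
      · exfalso
        obtain ⟨k, hk⟩ := Int.dvd_of_emod_eq_zero h
        have : D = 4*δ + 4*k^2 := by rw [hk] at hs; nlinarith
        omega
      · exact h
    have hnodd : n % 2 = 1 := by
      obtain ⟨j, hj⟩ := hcKodd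
      obtain ⟨k, hk⟩ := hn
      obtain ⟨d, hd⟩ : ∃ d, δ = 2*d + 1 := ⟨δ/2, by omega⟩
      have : n = 2*D*k - (2*j+1)*(2*d+1) := by rw [hj, hd] at hk; linarith
      rw [this]; ring_nf; omega
    -- Dt is odd
    have hDtodd : Dt % 2 = 1 := by
      rcases Int.emod_two_eq_zero_or_one Dt with h | h
      · exfalso
        obtain ⟨k, hk⟩ := Int.dvd_of_emod_eq_zero h
        obtain ⟨d, hd⟩ : ∃ d, δ = 2*d + 1 := ⟨δ/2, by omega⟩
        obtain ⟨j, hj⟩ : ∃ j, n = 2*j + 1 := ⟨n/2, by omega⟩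
        have : (2:ℤ) ∣ 1 := ⟨(2*d+1)^2*k - 2*j^2 - 2*j - 2*D*N,
          by rw [hk, hd, hj] at hN; linear_combination hN⟩
        omega
      · exact h
    -- 2 ∣ m, hence 2 ∣ A2, 2 ∣ B2, 2 ∣ e
    obtain ⟨m1, hm1⟩ : (2:ℤ) ∣ m := by exact_mod_cast hpm
    have hA2 : (2:ℤ) ∣ A2 := by
      have h2δA : (2:ℤ) ∣ δ * A2 := ⟨D*m1 - n, by rw [hm1] at hm; linarith⟩
      rcases (Int.prime_two.dvd_mul).mp h2δA with h | h
      · exact absurd h (by omega)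
      · exact h
    obtain ⟨a, ha⟩ := hA2
    obtain ⟨b, hb⟩ : (2:ℤ) ∣ B2 := by omega
    obtain ⟨f, hf⟩ : (2:ℤ) ∣ e - m := by exact_mod_cast h2
    -- e = a - b*s and a ≡ b (mod 2)
    have hea : e = a - b * s := by
      have h2e : 2 * e = 2 * (a - b * s) := by rw [ha, hb] at he; linarith
      linarith
    have hab : a % 2 = b % 2 := by
      obtain ⟨s1, hs1⟩ : ∃ s1, s = 2*s1 + 1 := ⟨s/2, by omega⟩
      have : a - b = 2*(f + m1 + b*s1) := by
        rw [hs1] at hea; rw [hm1, hea] at hf; linarith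
      omega
    -- Dt = a² - b²·D is then even: contradiction
    have hDt4 : Dt = a^2 - b^2*D := by
      have : 4 * Dt = 4 * (a^2 - b^2*D) := by rw [ha, hb] at hDt; linarith
      linarith
    obtain ⟨k, hk⟩ : (2:ℤ) ∣ a - b := by omega
    obtain ⟨d, hd⟩ : ∃ d, D = 2*d + 1 := ⟨D/2, by omega⟩
    have : (2:ℤ) ∣ Dt := ⟨k*(a+b) - b^2*d, by rw [hDt4, hd]; linear_combination (a+b)*hk⟩
    omega
  · -- p odd : p² ∣ Dt, contradicting squarefreeness
    have hpsq : (p : ℤ) ∣ s * m - δ * B2 := by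
      apply hpp.dvd_of_dvd_pow (n := 2)
      have : (s * m - δ * B2) ^ 2 = 4 * δ * m * (e - m) - 16 * N := by linarith
      rw [this]
      exact dvd_sub (Dvd.dvd.mul_left h2 _) (Dvd.dvd.mul_left hpN 16)
    have hpB2 : (p : ℤ) ∣ B2 := by
      have hδB : (p : ℤ) ∣ δ * B2 := by
        have : δ * B2 = s * m - (s * m - δ * B2) := by ring
        rw [this]
        exact dvd_sub (Dvd.dvd.mul_left hpm s) hpsq
      exact ((hpp.dvd_mul).mp hδB).resolve_left hpδ
    have hpA2 : (p : ℤ) ∣ A2 := by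
      have hpe : (p : ℤ) ∣ e := by
        have : e = (e - m) + m := by ring
        rw [this]; exact dvd_add h2 hpm
      have : A2 = 2 * e + B2 * s := by linarith
      rw [this]
      exact dvd_add (Dvd.dvd.mul_left hpe 2) (Dvd.dvd.mul_right hpB2 s)
    -- p² ∣ 4·Dt
    obtain ⟨a, ha⟩ := hpA2
    obtain ⟨b, hb⟩ := hpB2
    have h4Dt : 4 * Dt = (p:ℤ)^2 * (a^2 - b^2*D) := by
      rw [ha, hb] at hDt; linear_combination hDt
    have hp4 : ¬ (p : ℤ) ∣ 4 := by
      intro h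
      have : (p : ℤ) ∣ (2:ℤ)^2 := by norm_num; exact h
      have h2' : (p : ℤ) ∣ 2 := hpp.dvd_of_dvd_pow this
      have : p ∣ 2 := by exact_mod_cast h2'
      have hp2 := (Nat.prime_dvd_prime_iff_eq hp Nat.prime_two).mp this
      rw [hp2] at hpodd
      exact (by decide : ¬ Odd 2) hpodd
    have hpDt : (p : ℤ) ∣ Dt := by
      have h1' : (p : ℤ) ∣ 4 * Dt := by
        rw [h4Dt]; exact Dvd.dvd.mul_right (dvd_pow_self _ two_ne_zero) _
      exact ((hpp.dvd_mul).mp h1').resolve_left hp4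
    obtain ⟨t, ht⟩ := hpDt
    have h4t : (p : ℤ) ∣ 4 * t := by
      have hcan : (p:ℤ) * (4 * t) = (p:ℤ) * ((p:ℤ) * (a^2 - b^2*D)) := by
        rw [ht] at h4Dt; linear_combination h4Dt
      exact ⟨a^2 - b^2*D, mul_left_cancel₀ hpp.ne_zero hcan⟩
    have hpt : (p : ℤ) ∣ t := ((hpp.dvd_mul).mp h4t).resolve_left hp4
    obtain ⟨u, hu⟩ := hpt
    have : IsUnit ((p : ℤ)) := hDtsf (p : ℤ) ⟨u, by rw [ht, hu]; ring⟩
    exact hpp.not_unit this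
end

section
/- With η as in the relative integral basis lemma (η = (1+√(A+B√D))/2 or η = (2B+√D+2√(A+B√D))/4), write Tr_{K/F}(η) = α₀ + α₁(D+√D)/2 and N_{K/F}(η) = β₀ + β₁(D+√D)/2, and define c_K = α₀² + α₀α₁D + α₁²(D²−D)/4 − 4β₀ − 2β₁D. Then c_K is odd and 2c_K ≡ 2A (mod D). -/
/-- With `η` as in the relative integral basis lemma, write
`Tr η = α₀ + α₁ (D+√D)/2` and `N η = β₀ + β₁ (D+√D)/2`, and set
`c_K = α₀² + α₀α₁D + α₁²(D²-D)/4 - 4β₀ - 2β₁D`.  In the first case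
(`η = (1+√(A+B√D))/2`) one has `α₀ = 1, α₁ = 0, β₀ = (1-A+BD)/4, β₁ = -B/2`; in the
second case (`η = (2B+√D+2√(A+B√D))/4`, only when `D ≡ 5 mod 8`) one has
`α₀ = B - D/2, α₁ = 1, β₀ = (4B²+D-4A)/16, β₁ = 0`.  Then `c_K` is odd and
`2c_K ≡ 2A (mod D)`.  (Here `A = A2/2`, `B = B2/2` are half-integers; the `α`'s, `β`'s
are integers and the case equations are stated over `ℚ`.) -/
theorem stmt_11 (D : ℤ) (hD4 : D % 4 = 1) (hDsf : Squarefree D) (hDpos : 0 < D)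
    (A2 B2 : ℤ) (hhalf : A2 % 2 = B2 % 2)
    (Dt : ℤ) (hDt : 4 * Dt = A2 ^ 2 - B2 ^ 2 * D)
    (hDtsf : Squarefree Dt) (hDt4 : Dt % 4 = 1)
    (α0 α1 β0 β1 : ℤ)
    (hcase :
      ((α0 : ℚ) = 1 ∧ (α1 : ℚ) = 0 ∧
        (β0 : ℚ) = (1 - (A2 : ℚ)/2 + (B2 : ℚ)/2 * D)/4 ∧ (β1 : ℚ) = -((B2 : ℚ)/2)/2) ∨
      (D % 8 = 5 ∧ (α0 : ℚ) = (B2 : ℚ)/2 - (D : ℚ)/2 ∧ (α1 : ℚ) = 1 ∧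
        (β0 : ℚ) = (4 * ((B2 : ℚ)/2) ^ 2 + D - 4 * ((A2 : ℚ)/2))/16 ∧ (β1 : ℚ) = 0))
    (cK : ℤ)
    (hcK : (cK : ℚ) = (α0 : ℚ) ^ 2 + α0 * α1 * D + (α1 : ℚ) ^ 2 * ((D : ℚ) ^ 2 - D)/4
      - 4 * β0 - 2 * β1 * D) :
    Odd cK ∧ D ∣ 2 * cK - A2 := by
  rcases hcase with ⟨hα0, hα1, hβ0, hβ1⟩ | ⟨hD8, hα0, hα1, hβ0, hβ1⟩
  · -- Case 1
    have h1 : (cK : ℤ) = 1 - 4 * β0 - 2 * β1 * D := by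
      have : ((cK : ℤ) : ℚ) = ((1 - 4 * β0 - 2 * β1 * D : ℤ) : ℚ) := by
        push_cast
        rw [hcK, hα0, hα1]; ring
      exact_mod_cast this
    have h2 : 8 * β0 = 2 - A2 + B2 * D := by
      have : ((8 * β0 : ℤ) : ℚ) = ((2 - A2 + B2 * D : ℤ) : ℚ) := by
        push_cast
        rw [hβ0]; ring
      exact_mod_cast this
    have h3 : 4 * β1 = -B2 := by
      have : ((4 * β1 : ℤ) : ℚ) = ((-B2 : ℤ) : ℚ) := by
        push_cast
        rw [hβ1]; ring
      exact_mod_cast this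
    constructor
    · exact ⟨-2 * β0 - β1 * D, by linarith⟩
    · have : 2 * cK - A2 = 0 := by linear_combination 2 * h1 - h2 - D * h3
      simp [this]
  · -- Case 2
    have h1 : 4 * (cK : ℤ) = 4 * α0 ^ 2 + 4 * α0 * D + D ^ 2 - D - 16 * β0 := by
      have : ((4 * cK : ℤ) : ℚ) = ((4 * α0 ^ 2 + 4 * α0 * D + D ^ 2 - D - 16 * β0 : ℤ) : ℚ) := by
        push_cast
        rw [hcK, hα1, hβ1]; ring
      exact_mod_cast this
    have h2 : 2 * α0 = B2 - D := by
      have : ((2 * α0 : ℤ) : ℚ) = ((B2 - D : ℤ) : ℚ) := by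
        push_cast
        rw [hα0]; ring
      exact_mod_cast this
    have h3 : 16 * β0 = B2 ^ 2 + D - 2 * A2 := by
      have : ((16 * β0 : ℤ) : ℚ) = ((B2 ^ 2 + D - 2 * A2 : ℤ) : ℚ) := by
        push_cast
        rw [hβ0]; ring
      exact_mod_cast this
    have hkey2 : 4 * cK = 2 * A2 - 2 * D := by
      linear_combination h1 - h3 + (2 * α0 + D + B2) * h2
    have hkey : 2 * cK = A2 - D := by omega
    have hB2odd : B2 % 2 = 1 := by omega
    obtain ⟨k, hk⟩ : ∃ k, B2 = 2 * k + 1 := ⟨(B2 - 1) / 2, by omega⟩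
    have hsq : B2 ^ 2 = 4 * (k * (k + 1)) + 1 := by rw [hk]; ring
    have hke : k * (k + 1) % 2 = 0 := Int.even_iff.mp (Int.even_mul_succ_self k)
    constructor
    · rw [Int.odd_iff]; omega
    · exact ⟨-1, by omega⟩
end

section
/- Let D ≡ 1 mod 8 and ~D = A² − B²D ≡ 1 mod 4 with A, B integers and A odd. Suppose δ is a positive even integer with D − 4δ a square, and n is an integer with 8 | (δ²~D − n²). Then n ≡ δA mod 4 and consequently d_u(n) = 2δ(n + δA)/D ≡ 0 mod 16; in particular d_u(n) is not a fundamental discriminant. -/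
/-- Let `D ≡ 1 mod 8` and `~D = A² - B²D ≡ 1 mod 4` with `A, B` integers
and `A` odd.  Suppose `δ > 0` is even with `D - 4δ` a square, and `n` satisfies
`8 ∣ (δ² ~D - n²)`.  Then `n ≡ δ A mod 4`, and consequently
`d_u(n) = 2δ(n + δA)/D ≡ 0 mod 16`; in particular `d_u(n)` is not a fundamental
discriminant. -/
theorem stmt_18 (D : ℤ) (hD8 : D % 8 = 1)
    (A B : ℤ) (hA : Odd A)
    (Dt : ℤ) (hDt : Dt = A ^ 2 - B ^ 2 * D) (hDt4 : Dt % 4 = 1)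
    (δ : ℤ) (hδpos : 0 < δ) (hδeven : Even δ) (s : ℤ) (hs : D - 4 * δ = s ^ 2)
    (n : ℤ) (hn : (8 : ℤ) ∣ (δ ^ 2 * Dt - n ^ 2))
    (du : ℤ) (hdu : D * du = 2 * δ * (n + δ * A)) :
    (4 : ℤ) ∣ (n - δ * A) ∧ (16 : ℤ) ∣ du ∧ ¬ IsFundamentalDiscriminant du := by
  obtain ⟨k, hk⟩ := hδeven
  obtain ⟨c, hc⟩ := hn
  obtain ⟨a, ha⟩ := hA
  obtain ⟨t, ht⟩ : ∃ t, Dt = 4 * t + 1 := ⟨Dt / 4, by omega⟩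
  -- n is even
  have hne : Even n := by
    rcases Int.even_or_odd n with h | h
    · exact h
    · exfalso
      obtain ⟨m, hm⟩ := h
      have : 4 * (k * k * Dt) - (4 * (m ^ 2 + m) + 1) = 8 * c := by
        rw [← hc, hk, hm]; ring
      omega
  obtain ⟨m, hm⟩ := hne
  -- m ≡ k mod 2
  have hm2 : m % 2 = k % 2 := by
    have hev : Even (m ^ 2 - k ^ 2) := by
      refine ⟨2 * k ^ 2 * t - c, ?_⟩
      have h4 : 4 * (m ^ 2) = 4 * (k ^ 2 * Dt) - 8 * c := by
        rw [← hc, hk, hm]; ring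
      rw [ht] at h4
      nlinarith [h4]
    have hiff : Even (m ^ 2) ↔ Even (k ^ 2) := (Int.even_sub).mp hev
    have h1 : Even m ↔ Even k := by
      simpa [Int.even_pow] using hiff
    have h2 : m % 2 = 0 ↔ k % 2 = 0 := by
      rw [← Int.even_iff, ← Int.even_iff]; exact h1
    omega
  obtain ⟨j, hj⟩ : (2 : ℤ) ∣ (m - k) := by omega
  have goal1 : (4 : ℤ) ∣ (n - δ * A) := by
    refine ⟨j - k * a, ?_⟩
    rw [hm, hk, ha]
    linarith [hj]
  refine ⟨goal1, ?_, ?_⟩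
  · -- 16 ∣ du
    have h16D : (16 : ℤ) ∣ D * du := by
      refine ⟨k * (j + k * a + k), ?_⟩
      rw [hdu, hm, hk, ha]
      nlinarith [hj]
    obtain ⟨q, hq⟩ := h16D
    have hdue : Even du := by
      rcases Int.even_mul.mp (⟨8 * q, by linarith⟩ : Even (D * du)) with h | h
      · exfalso; rw [Int.even_iff] at h; omega
      · exact h
    obtain ⟨u, hu⟩ := hdue
    obtain ⟨e, he⟩ : (8 : ℤ) ∣ (D - 1) := by omega
    refine ⟨q - e * u, ?_⟩
    have : du = D * du - (D - 1) * du := by ring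
    rw [this, hq, he, hu]; ring
  · -- not fundamental
    intro hF
    have h16 : (16 : ℤ) ∣ du := by
      have h16D : (16 : ℤ) ∣ D * du := by
        refine ⟨k * (j + k * a + k), ?_⟩
        rw [hdu, hm, hk, ha]
        nlinarith [hj]
      obtain ⟨q, hq⟩ := h16D
      have hdue : Even du := by
        rcases Int.even_mul.mp (⟨8 * q, by linarith⟩ : Even (D * du)) with h | h
        · exfalso; rw [Int.even_iff] at h; omega
        · exact h
      obtain ⟨u, hu⟩ := hdue
      obtain ⟨e, he⟩ : (8 : ℤ) ∣ (D - 1) := by omega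
      refine ⟨q - e * u, ?_⟩
      have : du = D * du - (D - 1) * du := by ring
      rw [this, hq, he, hu]; ring
    rcases hF with ⟨h1, _⟩ | ⟨m', hm', _, h4⟩
    · omega
    · have : (4 : ℤ) ∣ m' := by
        obtain ⟨w, hw⟩ := h16
        exact ⟨w, by omega⟩
      omega
end
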